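/- arXiv:2107.04877 — 6 statements merged into one kernel-verified Lean document; each statement's English description precedes it below -/
import Mathlib

section
/- For any connected graph G, the strong metric dimension of G equals the vertex cover number of the strong resolving graph of G. -/
open SimpleGraph Finset

variable {V : Type*}

/-- A vertex `x` resolves the pair `u, v` if it is at different distances from them. -/
def IsResolvingSet (G : SimpleGraph V) (S : Set V) : Prop :=
  ∀ u v : V, u ≠ v → ∃ x ∈ S, G.dist u x ≠ G.dist v x

/-- The metric dimension: minimum cardinality of a resolving set. -/
noncomputable def metricDim (G : SimpleGraph V) [Fintype V] : ℕ :=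
  sInf {n | ∃ S : Finset V, S.card = n ∧ IsResolvingSet G ↑S}

/-- `w` strongly resolves `u, v`. -/
def StronglyResolves (G : SimpleGraph V) (w u v : V) : Prop :=
  G.dist w u = G.dist w v + G.dist v u ∨ G.dist w v = G.dist w u + G.dist u v

def IsStrongResolvingSet (G : SimpleGraph V) (S : Set V) : Prop :=
  ∀ u v : V, u ≠ v → ∃ w ∈ S, StronglyResolves G w u v

noncomputable def strongMetricDim (G : SimpleGraph V) [Fintype V] : ℕ :=
  sInf {n | ∃ S : Finset V, S.card = n ∧ IsStrongResolvingSet G ↑S}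

/-- `u` is maximally distant from `v`. -/
def MaxDistant (G : SimpleGraph V) (u v : V) : Prop :=
  ∀ w : V, G.Adj u w → G.dist v w ≤ G.dist v u

def MutuallyMaxDistant (G : SimpleGraph V) (u v : V) : Prop :=
  MaxDistant G u v ∧ MaxDistant G v u

/-- The strong resolving graph of `G`. -/
def strongResolvingGraph (G : SimpleGraph V) : SimpleGraph V where
  Adj u v := u ≠ v ∧ MutuallyMaxDistant G u v
  symm := by
    constructor
    intro u v h
    exact ⟨h.1.symm, h.2.2, h.2.1⟩
  loopless := by
    constructor
    intro u h
    exact h.1 rfl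

def IsVertexCover (H : SimpleGraph V) (S : Set V) : Prop :=
  ∀ u v : V, H.Adj u v → u ∈ S ∨ v ∈ S

noncomputable def vertexCoverNum (H : SimpleGraph V) [Fintype V] : ℕ :=
  sInf {n | ∃ S : Finset V, S.card = n ∧ _root_.IsVertexCover H ↑S}

def IsLocalResolvingSet (G : SimpleGraph V) (S : Set V) : Prop :=
  ∀ u v : V, G.Adj u v → ∃ x ∈ S, G.dist u x ≠ G.dist v x

noncomputable def localMetricDim (G : SimpleGraph V) [Fintype V] : ℕ :=
  sInf {n | ∃ S : Finset V, S.card = n ∧ IsLocalResolvingSet G ↑S}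

def IsIndepVertexSet (G : SimpleGraph V) (S : Set V) : Prop :=
  S.Pairwise fun u v => ¬ G.Adj u v

noncomputable def indepNum (G : SimpleGraph V) [Fintype V] : ℕ :=
  sSup {n | ∃ S : Finset V, S.card = n ∧ IsIndepVertexSet G ↑S}

def IsAdjResolvingSet (G : SimpleGraph V) (S : Set V) : Prop :=
  ∀ x y : V, x ≠ y → x ∉ S → y ∉ S →
    ∃ s ∈ S, (G.Adj s x ∧ ¬ G.Adj s y) ∨ (¬ G.Adj s x ∧ G.Adj s y)

noncomputable def adjDim (G : SimpleGraph V) [Fintype V] : ℕ :=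
  sInf {n | ∃ S : Finset V, S.card = n ∧ IsAdjResolvingSet G ↑S}

def IsKResolvingSet (G : SimpleGraph V) (k : ℕ) (S : Finset V) : Prop :=
  ∀ x y : V, x ≠ y → k ≤ (S.filter fun w => G.dist x w ≠ G.dist y w).card

noncomputable def kMetricDim (G : SimpleGraph V) [Fintype V] (k : ℕ) : ℕ :=
  sInf {n | ∃ S : Finset V, S.card = n ∧ IsKResolvingSet G k S}

def IsKMetricDimensional (G : SimpleGraph V) (k : ℕ) : Prop :=
  (∃ S : Finset V, IsKResolvingSet G k S) ∧
    ∀ j : ℕ, (∃ S : Finset V, IsKResolvingSet G j S) → j ≤ k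

/-- distance from a vertex to a finite set of vertices -/
noncomputable def fsetDist (G : SimpleGraph V) (v : V) (P : Finset V) : ℕ :=
  sInf {d | ∃ w ∈ P, G.dist v w = d}

def IsResolvingPartition [Fintype V] [DecidableEq V] (G : SimpleGraph V)
    (Pt : Finpartition (Finset.univ : Finset V)) : Prop :=
  ∀ u v : V, u ≠ v → ∃ P ∈ Pt.parts, fsetDist G u P ≠ fsetDist G v P

noncomputable def partitionDim (G : SimpleGraph V) [Fintype V] [DecidableEq V] : ℕ :=
  sInf {n | ∃ Pt : Finpartition (Finset.univ : Finset V), Pt.parts.card = n ∧ IsResolvingPartition G Pt}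

def SetStronglyResolves (G : SimpleGraph V) (W : Finset V) (x y : V) : Prop :=
  x ∉ W ∧ y ∉ W ∧
    (fsetDist G x W = G.dist x y + fsetDist G y W ∨
      fsetDist G y W = G.dist y x + fsetDist G x W)

def IsStrongResolvingPartition [Fintype V] [DecidableEq V] (G : SimpleGraph V)
    (Pt : Finpartition (Finset.univ : Finset V)) : Prop :=
  ∀ Q ∈ Pt.parts, ∀ x ∈ Q, ∀ y ∈ Q, x ≠ y →
    ∃ P ∈ Pt.parts, SetStronglyResolves G P x y

noncomputable def strongPartitionDim (G : SimpleGraph V) [Fintype V] [DecidableEq V] : ℕ :=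
  sInf {n | ∃ Pt : Finpartition (Finset.univ : Finset V),
    Pt.parts.card = n ∧ IsStrongResolvingPartition G Pt}

/-- distance from an edge (as an unordered pair) to a vertex -/
noncomputable def edgeDist (G : SimpleGraph V) (e : Sym2 V) (v : V) : ℕ :=
  Sym2.lift ⟨fun a b => min (G.dist a v) (G.dist b v), fun a b => min_comm _ _⟩ e

def IsEdgeResolvingSet (G : SimpleGraph V) (S : Set V) : Prop :=
  ∀ e ∈ G.edgeSet, ∀ f ∈ G.edgeSet, e ≠ f → ∃ x ∈ S, edgeDist G e x ≠ edgeDist G f x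

noncomputable def edgeMetricDim (G : SimpleGraph V) [Fintype V] : ℕ :=
  sInf {n | ∃ S : Finset V, S.card = n ∧ IsEdgeResolvingSet G ↑S}

noncomputable def Rset (G : SimpleGraph V) [Fintype V] (x y : V) : Finset V :=
  Finset.univ.filter fun w => G.dist x w ≠ G.dist y w

def IsResolvingFunction (G : SimpleGraph V) [Fintype V] (f : V → ℝ) : Prop :=
  (∀ v : V, 0 ≤ f v ∧ f v ≤ 1) ∧
    ∀ x y : V, x ≠ y → 1 ≤ ∑ w ∈ Rset G x y, f w

noncomputable def fracMetricDim (G : SimpleGraph V) [Fintype V] : ℝ :=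
  sInf {t : ℝ | ∃ f : V → ℝ, IsResolvingFunction G f ∧ t = ∑ v, f v}

def AreTwins (G : SimpleGraph V) (u v : V) : Prop :=
  u ≠ v ∧ (G.neighborSet u = G.neighborSet v ∨
    insert u (G.neighborSet u) = insert v (G.neighborSet v))

noncomputable def graphDiam (G : SimpleGraph V) : ℕ :=
  sSup (Set.range fun p : V × V => G.dist p.1 p.2)

/-!
Extend a geodesic through `u` and `v` in both directions as far as possible: first beyond `u` to a
vertex `u'` maximally distant from `v`, then beyond `v` to a vertex `v'` maximally distant from `u'`.
The ends `u'`, `v'` are then mutually maximally distant, so every vertex cover of the strong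
resolving graph contains one of them, and either end strongly resolves `u, v`. Conversely, a vertex
strongly resolving a mutually maximally distant pair must be one of the pair, so every strong
resolving set is a vertex cover of the strong resolving graph.
-/

lemma SimpleGraph.Reachable.exists_adj_dist_add_one_eq {G : SimpleGraph V} {v w : V}
    (h : G.Reachable v w) (hne : v ≠ w) : ∃ z, G.Adj v z ∧ G.dist w z + 1 = G.dist w v := by
  obtain ⟨p, hp⟩ := h.exists_walk_length_eq_dist
  cases p with
  | nil => exact absurd rfl hne
  | @cons _ z _ hvz q =>
    refine ⟨z, hvz, ?_⟩
    rw [Walk.length_cons] at hp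
    have hle : G.dist z w ≤ q.length := dist_le q
    have htri : G.dist v w ≤ G.dist v z + G.dist z w := hvz.reachable.dist_triangle_left w
    rw [dist_eq_one_iff_adj.mpr hvz] at htri
    rw [dist_comm (u := w) (v := z), dist_comm (u := w) (v := v)]
    omega

lemma MaxDistant.eq_of_dist_eq_add {G : SimpleGraph V} (hG : G.Connected) {u v w : V}
    (hv : MaxDistant G v u) (h : G.dist w u = G.dist w v + G.dist v u) : w = v := by
  by_contra hwv
  obtain ⟨z, hvz, hz⟩ := (hG v w).exists_adj_dist_add_one_eq (Ne.symm hwv)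
  have hzu : G.dist u z ≤ G.dist u v := hv z hvz
  have htri : G.dist w u ≤ G.dist w z + G.dist z u := hG.dist_triangle
  have := dist_comm (G := G) (u := u) (v := z)
  have := dist_comm (G := G) (u := u) (v := v)
  omega

lemma MutuallyMaxDistant.eq_or_eq_of_stronglyResolves {G : SimpleGraph V} (hG : G.Connected)
    {u v w : V} (huv : MutuallyMaxDistant G u v) (hw : StronglyResolves G w u v) :
    w = u ∨ w = v :=
  hw.elim (fun h => .inr (huv.2.eq_of_dist_eq_add hG h))
    (fun h => .inl (huv.1.eq_of_dist_eq_add hG h))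

lemma exists_maxDistant_dist_eq_add [Finite V] {G : SimpleGraph V} (hG : G.Connected) (u v : V) :
    ∃ u', MaxDistant G u' v ∧ G.dist v u' = G.dist v u + G.dist u u' := by
  obtain ⟨u', hu' : G.dist v u' = G.dist v u + G.dist u u', hmax⟩ :=
    (Set.toFinite {x | G.dist v x = G.dist v u + G.dist u x}).exists_maximalFor (G.dist v) _
      ⟨u, by simp⟩
  refine ⟨u', fun z hu'z => ?_, hu'⟩
  by_contra! hlt
  have hvz : G.dist v z ≤ G.dist v u' + G.dist u' z := hG.dist_triangle
  have huz : G.dist u z ≤ G.dist u u' + G.dist u' z := hG.dist_triangle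
  have hvz' : G.dist v z ≤ G.dist v u + G.dist u z := hG.dist_triangle
  rw [dist_eq_one_iff_adj.mpr hu'z] at hvz huz
  exact hlt.not_ge (hmax (show G.dist v z = G.dist v u + G.dist u z by omega) hlt.le)

lemma IsStrongResolvingSet.isVertexCover {G : SimpleGraph V} (hG : G.Connected) {S : Set V}
    (hS : IsStrongResolvingSet G S) : _root_.IsVertexCover (strongResolvingGraph G) S := by
  rintro u v ⟨huv, hmax⟩
  obtain ⟨w, hwS, hw⟩ := hS u v huv
  rcases hmax.eq_or_eq_of_stronglyResolves hG hw with rfl | rfl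
  exacts [.inl hwS, .inr hwS]

lemma IsVertexCover.isStrongResolvingSet [Finite V] {G : SimpleGraph V} (hG : G.Connected)
    {S : Set V} (hS : _root_.IsVertexCover (strongResolvingGraph G) S) :
    IsStrongResolvingSet G S := by
  intro u v huv
  obtain ⟨u', hu'v, hu'⟩ := exists_maxDistant_dist_eq_add hG u v
  obtain ⟨v', hv'u', hv'⟩ := exists_maxDistant_dist_eq_add hG v u'
  have hpos : 0 < G.dist v u := hG.pos_dist_of_ne huv.symm
  have hvu' : G.dist u' v = G.dist v u' := dist_comm
  have hu'v' : MaxDistant G u' v' := fun z hu'z => by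
    have hvz : G.dist v z ≤ G.dist v u' := hu'v z hu'z
    have htri : G.dist v' z ≤ G.dist v' v + G.dist v z := hG.dist_triangle
    have := dist_comm (G := G) (u := v') (v := u')
    have := dist_comm (G := G) (u := v') (v := v)
    omega
  have hne : u' ≠ v' := by
    rintro rfl
    rw [SimpleGraph.dist_self] at hv'
    omega
  rcases hS u' v' ⟨hne, hu'v', hv'u'⟩ with hu'S | hv'S
  · refine ⟨u', hu'S, .inr ?_⟩
    have := dist_comm (G := G) (u := u') (v := u)
    have := dist_comm (G := G) (u := u) (v := v)
    omega
  · refine ⟨v', hv'S, .inl ?_⟩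
    have htri : G.dist v' u ≤ G.dist v' v + G.dist v u := hG.dist_triangle
    have htri' : G.dist u' v' ≤ G.dist u' u + G.dist u v' := hG.dist_triangle
    have := dist_comm (G := G) (u := u') (v := u)
    have := dist_comm (G := G) (u := u) (v := v')
    have := dist_comm (G := G) (u := v) (v := v')
    omega

lemma isStrongResolvingSet_iff_isVertexCover [Finite V] {G : SimpleGraph V} (hG : G.Connected)
    (S : Set V) : IsStrongResolvingSet G S ↔ _root_.IsVertexCover (strongResolvingGraph G) S :=
  ⟨(·.isVertexCover hG), (·.isStrongResolvingSet hG)⟩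

theorem stmt0 [Fintype V] (G : SimpleGraph V) (hG : G.Connected) :
    strongMetricDim G = _root_.vertexCoverNum (strongResolvingGraph G) := by
  simp only [strongMetricDim, _root_.vertexCoverNum, isStrongResolvingSet_iff_isVertexCover hG]
end

section
/- If G is a connected graph of order n > 3, then the local metric dimension of G equals n−2 if and only if the clique number of G equals n−1. -/
open SimpleGraph Finset

variable {V : Type*}

/-!
A vertex cover is a local resolving set, since an endpoint in `S` resolves its own edge; so
deleting two non-adjacent vertices gives `dim_ℓ G ≤ n - 2` unless `G` is complete.

Two adjacent vertices at equal distance from every other vertex of `S` cannot both avoid `S`.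
In `K_n` this gives `dim_ℓ = n - 1`. If `V ∖ {v}` is a clique, two of its vertices with the same
adjacency to `v` are true twins, and any two of its vertices are separated only by `v`; hence at
most two vertices avoid a local resolving set, and `dim_ℓ G = n - 2` once `ω(G) = n - 1`.

Conversely, let `dim_ℓ G = n - 2` and let `u, v` be non-adjacent. For every other vertex `w`,
the set `V ∖ {u, v, w}` is too small to be local resolving, so it leaves the edge `uw` or `vw`
unresolved: `w` is a true twin of `u` in `G - v` or of `v` in `G - u`. If some twin of `u` is
adjacent to `v`, then `V ∖ {v}` is a clique, and symmetrically; otherwise no edge leaves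
`{u} ∪ N(u)`, contradicting connectivity.
-/

variable {G : SimpleGraph V} {p q u v w : V}

namespace SimpleGraph

lemma dist_le_dist_of_neighborSet_subset (hG : G.Connected)
    (h : G.neighborSet p ⊆ insert q (G.neighborSet q)) (hw : w ≠ p) :
    G.dist q w ≤ G.dist p w := by
  obtain ⟨c, hc⟩ := hG.exists_walk_length_eq_dist p w
  cases c with
  | nil => exact absurd rfl hw
  | cons hpa c =>
    rw [← hc, Walk.length_cons]
    rcases h hpa with rfl | hqa
    · exact (dist_le c).trans (Nat.le_succ _)
    · exact dist_le (Walk.cons hqa c)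

end SimpleGraph

lemma AreTwins.dist_eq (hG : G.Connected) (h : AreTwins G p q) (hwp : w ≠ p) (hwq : w ≠ q) :
    G.dist p w = G.dist q w := by
  have hsub : G.neighborSet p ⊆ insert q (G.neighborSet q) ∧
      G.neighborSet q ⊆ insert p (G.neighborSet p) := by
    rcases h.2 with h | h
    · rw [h]
      exact ⟨Set.subset_insert _ _, h ▸ Set.subset_insert _ _⟩
    · exact ⟨(Set.subset_insert _ _).trans h.le, (Set.subset_insert _ _).trans h.ge⟩
  exact le_antisymm (dist_le_dist_of_neighborSet_subset hG hsub.2 hwq)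
    (dist_le_dist_of_neighborSet_subset hG hsub.1 hwp)

lemma areTwins_of_isClique_compl_singleton (hv : G.IsClique {v}ᶜ) (hpv : p ≠ v) (hqv : q ≠ v)
    (hpq : p ≠ q) (h : G.Adj v p ↔ G.Adj v q) : AreTwins G p q := by
  refine ⟨hpq, Or.inr (Set.ext fun z => ?_)⟩
  simp only [Set.mem_insert_iff, mem_neighborSet]
  by_cases hzv : z = v
  · subst hzv
    simp [hpv.symm, hqv.symm, G.adj_comm p, G.adj_comm q, h]
  · have hp : z = p ∨ G.Adj p z := or_iff_not_imp_left.2 fun hzp => hv hpv hzv (Ne.symm hzp)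
    have hq : z = q ∨ G.Adj q z := or_iff_not_imp_left.2 fun hzq => hv hqv hzv (Ne.symm hzq)
    exact iff_of_true hp hq

section LocalResolvingSet

variable {S : Set V}

lemma IsVertexCover.isLocalResolvingSet (h : _root_.IsVertexCover G S) :
    IsLocalResolvingSet G S := by
  intro x y hxy
  rcases h x y hxy with hx | hy
  · exact ⟨x, hx, by simp [dist_eq_one_iff_adj.2 hxy.symm]⟩
  · exact ⟨y, hy, by simp [dist_eq_one_iff_adj.2 hxy]⟩

lemma IsLocalResolvingSet.mem_or_mem (hS : IsLocalResolvingSet G S) (hpq : G.Adj p q)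
    (h : ∀ z ∈ S, z ≠ p → z ≠ q → G.dist p z = G.dist q z) : p ∈ S ∨ q ∈ S := by
  by_contra! hpS
  obtain ⟨z, hz, hne⟩ := hS p q hpq
  exact hne (h z hz (ne_of_mem_of_not_mem hz hpS.1) (ne_of_mem_of_not_mem hz hpS.2))

lemma IsLocalResolvingSet.mem_or_mem_of_forall_adj (hS : IsLocalResolvingSet G S)
    (hpq : G.Adj p q) (h : ∀ z ∈ S, z ≠ p → z ≠ q → G.Adj p z ∧ G.Adj q z) : p ∈ S ∨ q ∈ S :=
  hS.mem_or_mem hpq fun z hz hzp hzq => by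
    rw [dist_eq_one_iff_adj.2 (h z hz hzp hzq).1, dist_eq_one_iff_adj.2 (h z hz hzp hzq).2]

lemma IsLocalResolvingSet.mem_or_mem_of_areTwins (hS : IsLocalResolvingSet G S)
    (hG : G.Connected) (hpq : G.Adj p q) (h : AreTwins G p q) : p ∈ S ∨ q ∈ S :=
  hS.mem_or_mem hpq fun _ _ hzp hzq => h.dist_eq hG hzp hzq

lemma IsLocalResolvingSet.mem_or_mem_of_isClique_compl_singleton (hS : IsLocalResolvingSet G S)
    (hG : G.Connected) (hv : G.IsClique {v}ᶜ) (hpv : p ≠ v) (hqv : q ≠ v) (hpq : p ≠ q)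
    (h : v ∉ S ∨ (G.Adj v p ↔ G.Adj v q)) : p ∈ S ∨ q ∈ S := by
  rcases h with hvS | h
  · refine hS.mem_or_mem_of_forall_adj (hv hpv hqv hpq) fun z hz hzp hzq => ?_
    have hzv : z ≠ v := ne_of_mem_of_not_mem hz hvS
    exact ⟨hv hpv hzv hzp.symm, hv hqv hzv hzq.symm⟩
  · exact hS.mem_or_mem_of_areTwins hG (hv hpv hqv hpq)
      (areTwins_of_isClique_compl_singleton hv hpv hqv hpq h)

lemma exists_adj_forall_dist_eq_of_not_isLocalResolvingSet (h : ¬IsLocalResolvingSet G S) :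
    ∃ x y, G.Adj x y ∧ x ∉ S ∧ y ∉ S ∧ ∀ z ∈ S, G.dist x z = G.dist y z := by
  simp only [IsLocalResolvingSet, not_forall, not_exists, not_and, not_not] at h
  obtain ⟨x, y, hxy, hd⟩ := h
  refine ⟨x, y, hxy, fun hx => ?_, fun hy => ?_, hd⟩
  · simpa [dist_eq_one_iff_adj.2 hxy.symm] using hd x hx
  · simpa [dist_eq_one_iff_adj.2 hxy] using hd y hy

end LocalResolvingSet

section LocalMetricDim

variable [Fintype V]

lemma localMetricDim_le {S : Finset V} (hS : IsLocalResolvingSet G ↑S) :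
    localMetricDim G ≤ S.card :=
  Nat.sInf_le ⟨S, rfl, hS⟩

lemma card_sub_le_localMetricDim [DecidableEq V] {m : ℕ}
    (h : ∀ S : Finset V, IsLocalResolvingSet G ↑S → Sᶜ.card ≤ m) :
    Fintype.card V - m ≤ localMetricDim G := by
  have hcover : _root_.IsVertexCover G ↑(univ : Finset V) := fun x _ _ => Or.inl (mem_univ x)
  have hne : {n | ∃ S : Finset V, S.card = n ∧ IsLocalResolvingSet G ↑S}.Nonempty :=
    ⟨_, univ, rfl, hcover.isLocalResolvingSet⟩
  obtain ⟨S, hcard, hS⟩ : ∃ S : Finset V, S.card = localMetricDim G ∧ IsLocalResolvingSet G ↑S :=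
    Nat.sInf_mem hne
  have := h S hS
  rw [card_compl] at this
  omega

lemma localMetricDim_le_card_sub_two (huv : u ≠ v) (h : ¬G.Adj u v) :
    localMetricDim G ≤ Fintype.card V - 2 := by
  classical
  have hcover : _root_.IsVertexCover G ↑({u, v} : Finset V)ᶜ := by
    intro x y hxy
    by_contra! hxy'
    simp only [coe_compl, coe_insert, coe_singleton, Set.mem_compl_iff, Set.mem_insert_iff,
      Set.mem_singleton_iff, not_not] at hxy'
    obtain ⟨rfl | rfl, rfl | rfl⟩ := hxy'
    exacts [hxy.ne rfl, h hxy, h hxy.symm, hxy.ne rfl]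
  calc localMetricDim G ≤ ({u, v}ᶜ : Finset V).card := localMetricDim_le hcover.isLocalResolvingSet
    _ = Fintype.card V - 2 := by rw [card_compl, card_pair huv]

lemma card_sub_one_le_localMetricDim (h : ∀ u v : V, u ≠ v → G.Adj u v) :
    Fintype.card V - 1 ≤ localMetricDim G := by
  classical
  refine card_sub_le_localMetricDim fun S hS => card_le_one.2 fun p hp q hq => ?_
  by_contra hpq
  have := hS.mem_or_mem_of_forall_adj (h p q hpq) fun z _ hzp hzq =>
    ⟨h p z (Ne.symm hzp), h q z (Ne.symm hzq)⟩
  simp_all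

lemma card_sub_two_le_localMetricDim (hG : G.Connected) (hv : G.IsClique {v}ᶜ) :
    Fintype.card V - 2 ≤ localMetricDim G := by
  classical
  refine card_sub_le_localMetricDim fun S hS => ?_
  by_contra! h
  obtain ⟨a, ha, b, hb, c, hc, hab, hac, hbc⟩ := two_lt_card.1 h
  rw [mem_compl] at ha hb hc
  have hpair : ∀ p q, p ∉ S → q ∉ S → p ≠ q → p ≠ v → q ≠ v →
      v ∉ S ∨ (G.Adj v p ↔ G.Adj v q) → False := fun p q hp hq hpq hpv hqv h' => by
    simpa [hp, hq] using hS.mem_or_mem_of_isClique_compl_singleton hG hv hpv hqv hpq h'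
  by_cases hav : a = v
  · subst hav
    exact hpair b c hb hc hbc (Ne.symm hab) (Ne.symm hac) (Or.inl ha)
  by_cases hbv : b = v
  · subst hbv
    exact hpair a c ha hc hac hav (Ne.symm hbc) (Or.inl hb)
  by_cases hcv : c = v
  · subst hcv
    exact hpair a b ha hb hab hav hbv (Or.inl hc)
  have : (G.Adj v a ↔ G.Adj v b) ∨ (G.Adj v a ↔ G.Adj v c) ∨ (G.Adj v b ↔ G.Adj v c) := by
    tauto
  rcases this with h' | h' | h'
  exacts [hpair a b ha hb hab hav hbv (Or.inr h'), hpair a c ha hc hac hav hcv (Or.inr h'),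
    hpair b c hb hc hbc hbv hcv (Or.inr h')]

end LocalMetricDim

section CliqueNum

variable [Fintype V]

lemma cliqueNum_lt_card_iff : G.cliqueNum < Fintype.card V ↔ ∃ u v, u ≠ v ∧ ¬G.Adj u v := by
  constructor
  · intro h
    by_contra! hadj
    have : G.IsClique ↑(univ : Finset V) := fun x _ y _ hxy => hadj x y hxy
    exact h.not_ge (by simpa using this.card_le_cliqueNum)
  · rintro ⟨u, v, huv, h⟩
    obtain ⟨s, hs⟩ := G.exists_isNClique_cliqueNum
    rw [← hs.card_eq, card_lt_iff_ne_univ]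
    rintro rfl
    exact h (hs.isClique (mem_univ u) (mem_univ v) huv)

lemma card_sub_one_le_cliqueNum (hv : G.IsClique {v}ᶜ) : Fintype.card V - 1 ≤ G.cliqueNum := by
  classical
  have : G.IsClique ↑(univ.erase v) := by simpa [Set.compl_eq_univ_sdiff] using hv
  simpa [card_erase_of_mem] using this.card_le_cliqueNum

lemma exists_isClique_compl_singleton (h : G.cliqueNum = Fintype.card V - 1)
    (hn : 0 < Fintype.card V) : ∃ v, G.IsClique {v}ᶜ := by
  classical
  obtain ⟨s, hs⟩ := G.exists_isNClique_cliqueNum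
  obtain ⟨v, hv⟩ : ∃ v, sᶜ = {v} := card_eq_one.1 (by rw [card_compl, hs.card_eq, h]; omega)
  refine ⟨v, hs.isClique.subset fun x hxv => ?_⟩
  by_contra hxs
  exact hxv (mem_singleton.1 (hv ▸ mem_compl.2 hxs))

lemma cliqueNum_eq_card_sub_one_iff (hn : 0 < Fintype.card V) :
    G.cliqueNum = Fintype.card V - 1 ↔
      (∃ v, G.IsClique {v}ᶜ) ∧ ∃ u v, u ≠ v ∧ ¬G.Adj u v := by
  refine ⟨fun h => ⟨exists_isClique_compl_singleton h hn, cliqueNum_lt_card_iff.1 (by omega)⟩, ?_⟩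
  rintro ⟨⟨v, hv⟩, hnadj⟩
  have := cliqueNum_lt_card_iff.2 hnadj
  have := card_sub_one_le_cliqueNum hv
  omega

end CliqueNum

/-- `u` and `w` are adjacent true twins of the graph `G - v`. -/
def AreTrueTwinsOff (G : SimpleGraph V) (v u w : V) : Prop :=
  G.Adj u w ∧ ∀ z, z ≠ u → z ≠ v → z ≠ w → (G.Adj u z ↔ G.Adj w z)

lemma isClique_compl_singleton_of_areTrueTwinsOff_of_adj {w₀ : V}
    (hP : ∀ w, w ≠ u → w ≠ v → AreTrueTwinsOff G v u w ∨ AreTrueTwinsOff G u v w)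
    (hw₀ : AreTrueTwinsOff G v u w₀)
    (hvw₀ : G.Adj v w₀) : G.IsClique {v}ᶜ := by
  have hu : ∀ x, x ≠ u → x ≠ v → G.Adj u x := by
    intro x hxu hxv
    by_cases hxw₀ : x = w₀
    · exact hxw₀ ▸ hw₀.1
    rcases hP x hxu hxv with hx | hx
    · exact hx.1
    · have hxw₀' := hx.2 w₀ hvw₀.ne.symm hw₀.1.ne.symm (Ne.symm hxw₀)
      exact (hw₀.2 x hxu hxv hxw₀).2 (hxw₀'.1 hvw₀).symm
  intro x hxv y hyv hxy
  by_cases hxu : x = u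
  · exact hxu ▸ hu y (hxu ▸ Ne.symm hxy) hyv
  by_cases hyu : y = u
  · exact hyu ▸ (hu x (hyu ▸ hxy) hxv).symm
  rcases hP x hxu hxv with hx | hx
  · exact (hx.2 y hyu hyv (Ne.symm hxy)).1 (hu y hyu hyv)
  rcases hP y hyu hyv with hy | hy
  · exact ((hy.2 x hxu hxv hxy).1 (hu x hxu hxv)).symm
  · exact (hx.2 y hyv hyu (Ne.symm hxy)).1 hy.1

lemma not_reachable_of_forall_areTrueTwinsOff
    (hP : ∀ w, w ≠ u → w ≠ v → AreTrueTwinsOff G v u w ∨ AreTrueTwinsOff G u v w)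
    (hne : u ≠ v) (huv : ¬G.Adj u v)
    (hv : ∀ w, AreTrueTwinsOff G v u w → ¬G.Adj v w)
    (hu : ∀ w, AreTrueTwinsOff G u v w → ¬G.Adj u w) : ¬G.Reachable u v := by
  set C : Set V := {x | x ≠ v ∧ (x = u ∨ G.Adj u x)}
  have hC : ∀ x y, x ∈ C → G.Adj x y → y ∈ C := by
    rintro x y ⟨hxv, rfl | hux⟩ hxy
    · exact ⟨fun hyv => huv (hyv ▸ hxy), Or.inr hxy⟩
    have hx : AreTrueTwinsOff G v u x :=
      (hP x hux.ne.symm hxv).resolve_right fun hx => hu x hx hux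
    have hyv : y ≠ v := fun hyv => hv x hx (hyv ▸ hxy.symm)
    by_cases hyu : y = u
    · exact ⟨hyv, Or.inl hyu⟩
    · exact ⟨hyv, Or.inr ((hx.2 y hyu hyv hxy.ne.symm).2 hxy)⟩
  rintro ⟨p⟩
  obtain ⟨d, -, hd, hd'⟩ := p.exists_boundary_dart C ⟨hne, Or.inl rfl⟩ fun h => h.1 rfl
  exact hd' (hC _ _ hd d.adj)

lemma isClique_compl_singleton_or_of_forall_areTrueTwinsOff
    (hP : ∀ w, w ≠ u → w ≠ v → AreTrueTwinsOff G v u w ∨ AreTrueTwinsOff G u v w)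
    (hG : G.Preconnected) (hne : u ≠ v)
    (huv : ¬G.Adj u v) : G.IsClique {u}ᶜ ∨ G.IsClique {v}ᶜ := by
  by_cases hv : ∃ w, AreTrueTwinsOff G v u w ∧ G.Adj v w
  · obtain ⟨w, hw, hvw⟩ := hv
    exact Or.inr (isClique_compl_singleton_of_areTrueTwinsOff_of_adj hP hw hvw)
  by_cases hu : ∃ w, AreTrueTwinsOff G u v w ∧ G.Adj u w
  · obtain ⟨w, hw, huw⟩ := hu
    exact Or.inl (isClique_compl_singleton_of_areTrueTwinsOff_of_adj
      (fun w hwv hwu => (hP w hwu hwv).symm) hw huw)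
  exact absurd (hG u v) (not_reachable_of_forall_areTrueTwinsOff hP hne huv
    (fun w hw hvw => hv ⟨w, hw, hvw⟩) fun w hw huw => hu ⟨w, hw, huw⟩)

lemma areTrueTwinsOff_or_of_not_isLocalResolvingSet (huv : ¬G.Adj u v)
    (h : ¬IsLocalResolvingSet G ({u, v, w} : Set V)ᶜ) :
    AreTrueTwinsOff G v u w ∨ AreTrueTwinsOff G u v w := by
  obtain ⟨x, y, hxy, hx, hy, hd⟩ := exists_adj_forall_dist_eq_of_not_isLocalResolvingSet h
  have hadj : ∀ z, z ≠ u → z ≠ v → z ≠ w → (G.Adj x z ↔ G.Adj y z) := fun z hzu hzv hzw => by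
    rw [← dist_eq_one_iff_adj, ← dist_eq_one_iff_adj, hd z (by simp [hzu, hzv, hzw])]
  simp only [Set.mem_compl_iff, Set.mem_insert_iff, Set.mem_singleton_iff, not_not] at hx hy
  rcases hx with rfl | rfl | rfl <;> rcases hy with rfl | rfl | rfl
  · exact absurd hxy G.irrefl
  · exact absurd hxy huv
  · exact Or.inl ⟨hxy, hadj⟩
  · exact absurd hxy.symm huv
  · exact absurd hxy G.irrefl
  · exact Or.inr ⟨hxy, fun z hzv hzu => hadj z hzu hzv⟩
  · exact Or.inl ⟨hxy.symm, fun z hzu hzv hzw => (hadj z hzu hzv hzw).symm⟩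
  · exact Or.inr ⟨hxy.symm, fun z hzv hzu hzw => (hadj z hzu hzv hzw).symm⟩
  · exact absurd hxy G.irrefl

lemma isClique_compl_singleton_or_of_localMetricDim_eq [Fintype V] (hG : G.Connected)
    (hn : 3 < Fintype.card V) (hdim : localMetricDim G = Fintype.card V - 2) (hne : u ≠ v)
    (huv : ¬G.Adj u v) : G.IsClique {u}ᶜ ∨ G.IsClique {v}ᶜ := by
  classical
  refine isClique_compl_singleton_or_of_forall_areTrueTwinsOff (fun w hwu hwv =>
    areTrueTwinsOff_or_of_not_isLocalResolvingSet huv fun hS => ?_) hG.preconnected hne huv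
  have := localMetricDim_le (S := ({u, v, w} : Finset V)ᶜ)
    (by simpa only [coe_compl, coe_insert, coe_singleton] using hS)
  rw [card_compl, card_eq_three.2 ⟨u, v, w, hne, hwu.symm, hwv.symm, rfl⟩] at this
  omega

theorem stmt4 [Fintype V] (G : SimpleGraph V) (hG : G.Connected)
    (hn : 3 < Fintype.card V) :
    localMetricDim G = Fintype.card V - 2 ↔ G.cliqueNum = Fintype.card V - 1 := by
  rw [cliqueNum_eq_card_sub_one_iff (by omega)]
  constructor
  · intro hdim
    obtain ⟨u, v, hne, huv⟩ : ∃ u v, u ≠ v ∧ ¬G.Adj u v := by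
      by_contra! hcomplete
      have := card_sub_one_le_localMetricDim hcomplete
      omega
    refine ⟨?_, u, v, hne, huv⟩
    rcases isClique_compl_singleton_or_of_localMetricDim_eq hG hn hdim hne huv with h | h
    exacts [⟨u, h⟩, ⟨v, h⟩]
  · rintro ⟨⟨v, hv⟩, u, w, huw, huw'⟩
    exact le_antisymm (localMetricDim_le_card_sub_two huw huw')
      (card_sub_two_le_localMetricDim hG hv)
end

section
/- A connected graph G of order n ≥ 2 has local metric dimension n−1 if and only if G is the complete graph on n vertices. -/
open SimpleGraph Finset

variable {V : Type*}

/-!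
Adjacent vertices are at distance `1`, so a vertex separates itself from each of its
neighbours; hence every vertex cover is a local resolving set. If `G` is not complete,
removing a non-adjacent pair of vertices leaves a vertex cover of size `n - 2`. In `Kₙ`,
two vertices outside a local resolving set `S` would be adjacent and at distance `1` from
every vertex of `S`, so `S` misses at most one vertex.
-/

theorem isLocalResolvingSet_of_isVertexCover {G : SimpleGraph V} {S : Set V}
    (hS : _root_.IsVertexCover G S) : IsLocalResolvingSet G S := by
  intro u v huv
  rcases hS u v huv with hu | hv
  · exact ⟨u, hu, by rw [dist_self, dist_eq_one_iff_adj.2 huv.symm]; exact zero_ne_one⟩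
  · exact ⟨v, hv, by rw [dist_self, dist_eq_one_iff_adj.2 huv]; exact one_ne_zero⟩

theorem isVertexCover_compl_pair_of_not_adj {G : SimpleGraph V} {u v : V} (h : ¬G.Adj u v) :
    _root_.IsVertexCover G ({u, v}ᶜ : Set V) := by
  intro x y hxy
  by_contra hxy'
  simp only [Set.mem_compl_iff, Set.mem_insert_iff, Set.mem_singleton_iff, not_or,
    not_and_or, not_not] at hxy'
  rcases hxy' with ⟨rfl | rfl, rfl | rfl⟩
  exacts [hxy.ne rfl, h hxy, h hxy.symm, hxy.ne rfl]

section Finite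

variable [Fintype V]

theorem localMetricDim_le_card {G : SimpleGraph V} {S : Finset V}
    (hS : IsLocalResolvingSet G S) : localMetricDim G ≤ #S :=
  Nat.sInf_le ⟨S, rfl, hS⟩

theorem exists_isLocalResolvingSet_card_eq_localMetricDim (G : SimpleGraph V) :
    ∃ S : Finset V, #S = localMetricDim G ∧ IsLocalResolvingSet G S := by
  have hmem : localMetricDim G ∈ {n | ∃ S : Finset V, #S = n ∧ IsLocalResolvingSet G S} :=
    Nat.sInf_mem ⟨_, univ, rfl, isLocalResolvingSet_of_isVertexCover fun u _ _ => by simp⟩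
  exact hmem

theorem localMetricDim_lt_card_sub_one_of_ne_top {G : SimpleGraph V} (hG : G ≠ ⊤) :
    localMetricDim G < Fintype.card V - 1 := by
  classical
  obtain ⟨u, v, huv, hnadj⟩ := ne_top_iff_exists_not_adj.1 hG
  have hcover : IsLocalResolvingSet G ↑({u, v}ᶜ : Finset V) := by
    rw [coe_compl, coe_pair]
    exact isLocalResolvingSet_of_isVertexCover (isVertexCover_compl_pair_of_not_adj hnadj)
  have hcard : 1 < Fintype.card V := Fintype.one_lt_card_iff.2 ⟨u, v, huv⟩
  calc localMetricDim G ≤ #({u, v}ᶜ : Finset V) := localMetricDim_le_card hcover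
    _ = Fintype.card V - 2 := by rw [card_compl, card_pair huv]
    _ < Fintype.card V - 1 := by omega

theorem card_sub_one_le_card_of_isLocalResolvingSet_top {S : Finset V}
    (hS : IsLocalResolvingSet (⊤ : SimpleGraph V) S) : Fintype.card V - 1 ≤ #S := by
  classical
  have hcompl : #Sᶜ ≤ 1 := by
    refine card_le_one.2 fun x hx y hy => by_contra fun hxy => ?_
    obtain ⟨w, hw, hresolves⟩ := hS x y hxy
    rw [mem_compl] at hx hy
    rw [dist_top_of_ne (ne_of_mem_of_not_mem hw hx).symm,
      dist_top_of_ne (ne_of_mem_of_not_mem hw hy).symm] at hresolves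
    exact hresolves rfl
  rw [card_compl] at hcompl
  omega

theorem localMetricDim_top : localMetricDim (⊤ : SimpleGraph V) = Fintype.card V - 1 := by
  classical
  obtain ⟨S, hcard, hS⟩ := exists_isLocalResolvingSet_card_eq_localMetricDim (⊤ : SimpleGraph V)
  refine le_antisymm ?_ (hcard ▸ card_sub_one_le_card_of_isLocalResolvingSet_top hS)
  rcases isEmpty_or_nonempty V with hV | hV
  · simp [← hcard, Finset.eq_empty_of_isEmpty S]
  · obtain ⟨v⟩ := hV
    have hcover : IsLocalResolvingSet (⊤ : SimpleGraph V) ↑({v}ᶜ : Finset V) := by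
      refine isLocalResolvingSet_of_isVertexCover fun x y hxy => ?_
      simp only [coe_compl, coe_singleton, Set.mem_compl_iff, Set.mem_singleton_iff]
      by_contra! h
      exact hxy.ne (h.1.trans h.2.symm)
    simpa [card_compl] using localMetricDim_le_card hcover

end Finite

theorem stmt5_general [Fintype V] (G : SimpleGraph V) :
    localMetricDim G = Fintype.card V - 1 ↔ G = ⊤ := by
  refine ⟨fun h => ?_, fun h => h ▸ localMetricDim_top⟩
  by_contra hG
  exact (localMetricDim_lt_card_sub_one_of_ne_top hG).ne h

theorem stmt5 [Fintype V] (G : SimpleGraph V) (hG : G.Connected)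
    (hn : 2 ≤ Fintype.card V) :
    localMetricDim G = Fintype.card V - 1 ↔ G = ⊤ :=
  stmt5_general G
end

section
/- For any cycle C_n with n odd and any k with 1 ≤ k ≤ n−1, the k-metric dimension of C_n equals k+1. -/
open SimpleGraph Finset

variable {V : Type*}

/-!
If two distinct vertices `x, y` of an odd cycle are equidistant from `w`, then `w - x = -(w - y)`,
i.e. `2w = x + y`; as `2` is invertible modulo an odd `n`, at most one vertex is equidistant from
`x` and `y`, so any `k + 1` vertices form a `k`-resolving set. Conversely every vertex `w` is
equidistant from its two neighbours `w ± 1`, so it fails to distinguish them and a `k`-resolving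
set needs `k` further vertices.
-/

section KResolving

variable {G : SimpleGraph V} {k : ℕ}

theorem isKResolvingSet_of_le_card
    (hunique : ∀ x y, x ≠ y → {w | G.dist x w = G.dist y w}.Subsingleton) {S : Finset V}
    (hS : k + 1 ≤ #S) : IsKResolvingSet G k S := by
  intro x y hxy
  have hequi : #(S.filter fun w => ¬G.dist x w ≠ G.dist y w) ≤ 1 :=
    card_le_one.mpr fun a ha b hb => hunique x y hxy (by simpa using (mem_filter.mp ha).2)
      (by simpa using (mem_filter.mp hb).2)
  have hsplit := card_filter_add_card_filter_not (s := S) (fun w => G.dist x w ≠ G.dist y w)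
  omega

theorem IsKResolvingSet.lt_card [Nonempty V]
    (hblind : ∀ w, ∃ x y, x ≠ y ∧ G.dist x w = G.dist y w) {S : Finset V}
    (hS : IsKResolvingSet G k S) (hk : 0 < k) : k < #S := by
  classical
  obtain rfl | ⟨w, hw⟩ := S.eq_empty_or_nonempty
  · obtain ⟨x, y, hxy, -⟩ := hblind (Classical.arbitrary V)
    simpa using (hS x y hxy).trans_lt' hk
  obtain ⟨x, y, hxy, hw_equi⟩ := hblind w
  have hsub : (S.filter fun z => G.dist x z ≠ G.dist y z) ⊆ S.erase w := fun z hz =>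
    mem_erase.mpr ⟨fun hzw => (mem_filter.mp hz).2 (hzw ▸ hw_equi), (mem_filter.mp hz).1⟩
  calc k ≤ #(S.filter fun z => G.dist x z ≠ G.dist y z) := hS x y hxy
    _ ≤ #(S.erase w) := card_le_card hsub
    _ < #S := card_erase_lt_of_mem hw

theorem kMetricDim_eq_add_one [Fintype V]
    (hunique : ∀ x y, x ≠ y → {w | G.dist x w = G.dist y w}.Subsingleton)
    (hblind : ∀ w, ∃ x y, x ≠ y ∧ G.dist x w = G.dist y w) (hk : 0 < k)
    (hkV : k < Fintype.card V) : kMetricDim G k = k + 1 := by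
  have : Nonempty V := Fintype.card_pos_iff.mp (hk.trans hkV)
  obtain ⟨S, -, hS⟩ := exists_subset_card_eq (s := (univ : Finset V)) (n := k + 1)
    (by rw [card_univ]; omega)
  refine IsLeast.csInf_eq ⟨⟨S, hS, isKResolvingSet_of_le_card hunique hS.ge⟩, ?_⟩
  rintro _ ⟨T, rfl, hT⟩
  exact hT.lt_card hblind hk

end KResolving

section CycleGraph

open scoped Fin.CommRing

variable {n : ℕ}

/-- The length of the shorter arc from `0` to `a` on the cycle `ℤ/n`. -/
def circNorm (a : Fin n) : ℕ := min a.val (-a).val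

theorem circNorm_neg (a : Fin n) : circNorm (-a) = circNorm a := by
  rw [circNorm, circNorm, neg_neg, min_comm]

theorem circNorm_add_one_le (a : Fin (n + 1)) : circNorm (a + 1) ≤ circNorm a + 1 := by
  have := a.isLt
  simp only [circNorm, Fin.val_neg, Fin.val_add_one, Fin.ext_iff, Fin.val_last, Fin.val_zero]
  split_ifs <;> omega

theorem circNorm_sub_one_le (a : Fin (n + 1)) : circNorm (a - 1) ≤ circNorm a + 1 := by
  rw [← circNorm_neg, neg_sub, sub_eq_neg_add, ← circNorm_neg a]
  exact circNorm_add_one_le (-a)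

theorem eq_or_eq_neg_of_circNorm_eq {a b : Fin (n + 1)} (h : circNorm a = circNorm b) :
    a = b ∨ a = -b := by
  have := a.isLt
  have := b.isLt
  simp only [circNorm, Fin.val_neg, Fin.ext_iff, Fin.val_zero] at h ⊢
  split_ifs at h ⊢ <;> omega

theorem Fin.eq_of_add_self_eq_add_self {a b : Fin n} (hn : Odd n) (h : a + a = b + b) :
    a = b := by
  have h2 : 2 * a.val ≡ 2 * b.val [MOD n] := by
    simpa only [two_mul, Nat.ModEq, Fin.ext_iff, Fin.val_add] using h
  exact Fin.ext ((Nat.ModEq.cancel_left_of_coprime (Nat.coprime_two_right.mpr hn) h2).eq_of_lt_of_lt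
    a.isLt b.isLt)

theorem cycleGraph_adj_add_one (u : Fin (n + 2)) : (cycleGraph (n + 2)).Adj u (u + 1) := by
  simp [cycleGraph_adj]

theorem cycleGraph_dist_add_natCast_le (u : Fin (n + 2)) (m : ℕ) :
    (cycleGraph (n + 2)).dist u (u + m) ≤ m := by
  induction m generalizing u with
  | zero => simp
  | succ m ih =>
    calc (cycleGraph (n + 2)).dist u (u + ↑(m + 1))
        ≤ (cycleGraph (n + 2)).dist u (u + 1) +
            (cycleGraph (n + 2)).dist (u + 1) (u + 1 + m) := by
          rw [Nat.cast_succ, add_comm (m : Fin (n + 2)), ← add_assoc]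
          exact cycleGraph_connected.dist_triangle
      _ ≤ 1 + m := add_le_add (dist_eq_one_iff_adj.mpr (cycleGraph_adj_add_one u)).le (ih _)
      _ = m + 1 := add_comm _ _

theorem circNorm_sub_le_length {u v : Fin (n + 2)} (p : (cycleGraph (n + 2)).Walk u v) :
    circNorm (v - u) ≤ p.length := by
  induction p with
  | nil => simp [circNorm]
  | @cons u x v h p ih =>
    rw [Walk.length_cons]
    rcases cycleGraph_adj.mp h with h | h
    · calc circNorm (v - u) = circNorm (v - x - 1) := by rw [← h]; ring_nf
        _ ≤ p.length + 1 := by have := circNorm_sub_one_le (v - x); omega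
    · calc circNorm (v - u) = circNorm (v - x + 1) := by rw [← h]; ring_nf
        _ ≤ p.length + 1 := by have := circNorm_add_one_le (v - x); omega

theorem cycleGraph_dist (u v : Fin (n + 2)) :
    (cycleGraph (n + 2)).dist u v = circNorm (v - u) := by
  refine le_antisymm (le_min ?_ ?_) ?_
  · simpa using cycleGraph_dist_add_natCast_le u (v - u).val
  · rw [dist_comm, neg_sub]
    simpa using cycleGraph_dist_add_natCast_le v (u - v).val
  · obtain ⟨p, hp⟩ := cycleGraph_connected.exists_walk_length_eq_dist u v
    exact hp ▸ circNorm_sub_le_length p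

theorem add_self_eq_of_cycleGraph_dist_eq {x y w : Fin (n + 2)} (hxy : x ≠ y)
    (h : (cycleGraph (n + 2)).dist x w = (cycleGraph (n + 2)).dist y w) : w + w = x + y := by
  rw [cycleGraph_dist, cycleGraph_dist] at h
  rcases eq_or_eq_neg_of_circNorm_eq h with h | h
  · exact absurd (sub_right_injective h) hxy
  · linear_combination h

theorem cycleGraph_equidistant_subsingleton (hn : Odd (n + 2)) {x y : Fin (n + 2)} (hxy : x ≠ y) :
    {w | (cycleGraph (n + 2)).dist x w = (cycleGraph (n + 2)).dist y w}.Subsingleton :=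
  fun _ h₁ _ h₂ => Fin.eq_of_add_self_eq_add_self hn <|
    (add_self_eq_of_cycleGraph_dist_eq hxy h₁).trans
      (add_self_eq_of_cycleGraph_dist_eq hxy h₂).symm

theorem cycleGraph_dist_add_one_eq_dist_sub_one (w : Fin (n + 2)) :
    (cycleGraph (n + 2)).dist (w + 1) w = (cycleGraph (n + 2)).dist (w - 1) w := by
  have h := cycleGraph_adj_add_one (w - 1)
  rw [sub_add_cancel] at h
  rw [dist_eq_one_iff_adj.mpr (cycleGraph_adj_add_one w).symm, dist_eq_one_iff_adj.mpr h]

theorem Fin.add_one_ne_sub_one (hn : Odd (n + 2)) (w : Fin (n + 2)) : w + 1 ≠ w - 1 := by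
  intro h
  have : (1 : Fin (n + 2)) = 0 :=
    Fin.eq_of_add_self_eq_add_self hn (by linear_combination h)
  simp at this

end CycleGraph

theorem stmt12_general (n k : ℕ) (hodd : Odd n) (hk1 : 1 ≤ k) (hk2 : k ≤ n - 1) :
    kMetricDim (cycleGraph n) k = k + 1 := by
  obtain ⟨m, rfl⟩ : ∃ m, n = m + 2 := ⟨n - 2, by omega⟩
  refine kMetricDim_eq_add_one (fun x y hxy => cycleGraph_equidistant_subsingleton hodd hxy)
    (fun w => ⟨w + 1, w - 1, Fin.add_one_ne_sub_one hodd w,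
      cycleGraph_dist_add_one_eq_dist_sub_one w⟩) hk1 (by rw [Fintype.card_fin]; omega)

theorem stmt12 (n k : ℕ) (hn : 3 ≤ n) (hodd : Odd n) (hk1 : 1 ≤ k) (hk2 : k ≤ n - 1) :
    kMetricDim (cycleGraph n) k = k + 1 :=
  stmt12_general n k hodd hk1 hk2
end

section
/- For any connected graph G, the partition dimension of G is at most the metric dimension of G plus one. -/
open SimpleGraph Finset

variable {V : Type*}

/-! If `S` resolves `G`, so does the partition of `V` into the singletons `{x}`, `x ∈ S`, and the
rest `V \ S`, because `d(v, {x}) = d(v, x)`; it has at most `|S| + 1` parts. -/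

namespace Finpartition

variable {α : Type*} [Fintype α] [DecidableEq α]

lemma exists_singleton_mem_card_le (S : Finset α) :
    ∃ P : Finpartition (Finset.univ : Finset α),
      (∀ x ∈ S, {x} ∈ P.parts) ∧ P.parts.card ≤ S.card + 1 := by
  let P := (⊥ : Finpartition S).extendOfLE (Finset.subset_univ S)
  refine ⟨P, fun x hx ↦ parts_subset_extendOfLE _ _ (mem_bot_iff.2 ⟨x, hx, rfl⟩), ?_⟩
  have hsub : P.parts ⊆ insert (Finset.univ \ S) (⊥ : Finpartition S).parts := fun p hp ↦ by
    rcases mem_parts_or_eq_sdiff_of_mem_extendOfLE _ _ hp with h | rfl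
    · exact Finset.mem_insert_of_mem h
    · exact Finset.mem_insert_self _ _
  calc P.parts.card ≤ (insert (Finset.univ \ S) (⊥ : Finpartition S).parts).card :=
        Finset.card_le_card hsub
    _ ≤ (⊥ : Finpartition S).parts.card + 1 := Finset.card_insert_le _ _
    _ = S.card + 1 := by rw [card_bot]

end Finpartition

namespace SimpleGraph

variable {G : SimpleGraph V}

lemma fsetDist_singleton (G : SimpleGraph V) (v x : V) : fsetDist G v {x} = G.dist v x := by
  have h : {d | ∃ w ∈ ({x} : Finset V), G.dist v w = d} = {G.dist v x} := by
    ext d; simp [eq_comm]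
  rw [fsetDist, h, csInf_singleton]

lemma Connected.isResolvingSet_univ (hG : G.Connected) : IsResolvingSet G Set.univ := by
  intro u v huv
  refine ⟨u, Set.mem_univ u, ?_⟩
  rw [G.dist_self, ne_comm, Ne, (hG.preconnected v u).dist_eq_zero_iff]
  exact huv.symm

lemma Connected.exists_isResolvingSet_card_eq_metricDim [Fintype V] (hG : G.Connected) :
    ∃ S : Finset V, S.card = metricDim G ∧ IsResolvingSet G ↑S :=
  Nat.sInf_mem (s := {n | ∃ S : Finset V, S.card = n ∧ IsResolvingSet G ↑S})
    ⟨_, Finset.univ, rfl, by simpa using hG.isResolvingSet_univ⟩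

lemma isResolvingPartition_of_singleton_mem [Fintype V] [DecidableEq V] {S : Finset V}
    (hS : IsResolvingSet G ↑S) (Pt : Finpartition (Finset.univ : Finset V))
    (hPt : ∀ x ∈ S, {x} ∈ Pt.parts) : IsResolvingPartition G Pt := by
  intro u v huv
  obtain ⟨x, hx, hd⟩ := hS u v huv
  exact ⟨{x}, hPt x hx, by rwa [fsetDist_singleton, fsetDist_singleton]⟩

lemma partitionDim_le_card_add_one [Fintype V] [DecidableEq V] {S : Finset V}
    (hS : IsResolvingSet G ↑S) : partitionDim G ≤ S.card + 1 := by
  obtain ⟨P, hsingle, hcard⟩ := Finpartition.exists_singleton_mem_card_le S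
  refine (Nat.sInf_le ?_).trans hcard
  exact ⟨P, rfl, isResolvingPartition_of_singleton_mem hS P hsingle⟩

end SimpleGraph

theorem stmt13 [Fintype V] [DecidableEq V] (G : SimpleGraph V) (hG : G.Connected) :
    partitionDim G ≤ metricDim G + 1 := by
  obtain ⟨S, hcard, hS⟩ := hG.exists_isResolvingSet_card_eq_metricDim
  exact hcard ▸ partitionDim_le_card_add_one hS
end

section
/- If G is a connected bipartite graph, then every resolving set of G is also an edge resolving set; consequently edim(G) ≤ dim(G) for connected bipartite graphs. -/
open SimpleGraph Finset

variable {V : Type*}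

/-!
If `uv` is an edge and `m = min (d u w) (d v w)`, then `d u w ∈ {m, m + 1}`, and in a bipartite
graph the parity of `d u w` is fixed by the colours of `u` and `w`. Hence two edges at the same
edge distance from `w` have their equally coloured ends at the same distance from `w`. If no
vertex of a resolving set distinguishes two edges, it distinguishes neither pair of equally
coloured ends, so the edges coincide.
-/

section EdgeResolving

variable {G : SimpleGraph V}

@[simp]
lemma edgeDist_mk (u v w : V) : edgeDist G s(u, v) w = min (G.dist u w) (G.dist v w) := rfl

theorem SimpleGraph.Coloring.even_dist_iff (c : G.Coloring Bool) {u v : V}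
    (h : G.Reachable u v) : Even (G.dist u v) ↔ (c u ↔ c v) := by
  obtain ⟨p, hp⟩ := h.exists_walk_length_eq_dist
  rw [← hp]
  exact c.even_length_iff_congr p

lemma SimpleGraph.Adj.dist_le_edgeDist_add_one {u v : V} (huv : G.Adj u v) (w : V) :
    G.dist u w ≤ edgeDist G s(u, v) w + 1 := by
  rw [edgeDist_mk, dist_comm (u := u), dist_comm (u := v)]
  rcases huv.symm.diff_dist_adj (u := w) with h | h | h <;> omega

theorem SimpleGraph.Coloring.dist_eq_of_edgeDist_eq (hG : G.Connected) (c : G.Coloring Bool)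
    {u v x y w : V} (huv : G.Adj u v) (hxy : G.Adj x y) (hc : c u = c x)
    (h : edgeDist G s(u, v) w = edgeDist G s(x, y) w) : G.dist u w = G.dist x w := by
  have hparity : Even (G.dist u w) ↔ Even (G.dist x w) := by
    rw [c.even_dist_iff (hG u w), c.even_dist_iff (hG x w), hc]
  have hu : edgeDist G s(u, v) w ≤ G.dist u w := min_le_left _ _
  have hx : edgeDist G s(x, y) w ≤ G.dist x w := min_le_left _ _
  have hu' := huv.dist_le_edgeDist_add_one w
  have hx' := hxy.dist_le_edgeDist_add_one w
  rw [Nat.even_iff, Nat.even_iff] at hparity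
  omega

lemma IsResolvingSet.eq_of_forall_dist_eq {S : Set V} (hS : IsResolvingSet G S) {u v : V}
    (h : ∀ w ∈ S, G.dist u w = G.dist v w) : u = v := by
  by_contra huv
  obtain ⟨w, hw, hne⟩ := hS u v huv
  exact hne (h w hw)

theorem IsResolvingSet.eq_of_edgeDist_eq_of_color_eq (hG : G.Connected) (c : G.Coloring Bool)
    {S : Set V} (hS : IsResolvingSet G S) {u v x y : V} (huv : G.Adj u v) (hxy : G.Adj x y)
    (hc : c u = c x) (h : ∀ w ∈ S, edgeDist G s(u, v) w = edgeDist G s(x, y) w) :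
    s(u, v) = s(x, y) := by
  have hc' : c v = c y := by
    rw [Bool.eq_not.mpr (c.valid huv).symm, Bool.eq_not.mpr (c.valid hxy).symm, hc]
  have hux : u = x := hS.eq_of_forall_dist_eq fun w hw =>
    c.dist_eq_of_edgeDist_eq hG huv hxy hc (h w hw)
  have hvy : v = y := hS.eq_of_forall_dist_eq fun w hw =>
    c.dist_eq_of_edgeDist_eq hG huv.symm hxy.symm hc'
      (by rw [Sym2.eq_swap, h w hw, Sym2.eq_swap])
  rw [hux, hvy]

theorem IsResolvingSet.isEdgeResolvingSet (hG : G.Connected) (hbip : G.Colorable 2)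
    {S : Set V} (hS : IsResolvingSet G S) : IsEdgeResolvingSet G S := by
  obtain ⟨c⟩ := hbip
  let c₂ : G.Coloring Bool := G.recolorOfEquiv finTwoEquiv c
  intro e he f hf hne
  by_contra! h
  induction e using Sym2.ind with | _ u v => ?_
  induction f using Sym2.ind with | _ x y => ?_
  rw [mem_edgeSet] at he hf
  by_cases hc : c₂ u = c₂ x
  · exact hne (hS.eq_of_edgeDist_eq_of_color_eq hG c₂ he hf hc h)
  · have hc' : c₂ u = c₂ y := by
      rw [Bool.eq_not.mpr hc, Bool.eq_not.mpr (c₂.valid hf).symm]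
    rw [Sym2.eq_swap (a := x)] at hne h
    exact hne (hS.eq_of_edgeDist_eq_of_color_eq hG c₂ he hf.symm hc' h)

lemma isResolvingSet_univ (hG : G.Connected) : IsResolvingSet G Set.univ :=
  fun u v huv => ⟨u, trivial, by simpa using (hG.pos_dist_of_ne huv.symm).ne⟩

theorem edgeMetricDim_le_metricDim [Fintype V] (hG : G.Connected)
    (h : ∀ S : Set V, IsResolvingSet G S → IsEdgeResolvingSet G S) :
    edgeMetricDim G ≤ metricDim G := by
  obtain ⟨S, hcard, hS⟩ := Nat.sInf_mem
    (s := {n | ∃ S : Finset V, S.card = n ∧ IsResolvingSet G ↑S})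
    ⟨_, univ, rfl, by simpa using isResolvingSet_univ hG⟩
  exact Nat.sInf_le ⟨S, hcard, h S hS⟩

end EdgeResolving

theorem stmt18 [Fintype V] (G : SimpleGraph V) (hG : G.Connected)
    (hbip : G.Colorable 2) :
    (∀ S : Set V, IsResolvingSet G S → IsEdgeResolvingSet G S) ∧
      edgeMetricDim G ≤ metricDim G :=
  have h : ∀ S : Set V, IsResolvingSet G S → IsEdgeResolvingSet G S :=
    fun _ hS => hS.isEdgeResolvingSet hG hbip
  ⟨h, edgeMetricDim_le_metricDim hG h⟩
end
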